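/- There exists a constant c⁗ > 0 such that for all I ∈ {A, B}, all ν ∈ {1, 2, 3}, all z, y ∈ ℝ² with |z| < 0.33/√3 and |y| < 0.33/√3, and for every n = (n₁, n₂) ∈ ℤ² with n ≠ (0, 0), there exists l₀ ∈ {0, 1, 2, 3, 4, 5} with |z + n₁v₁ + n₂v₂ − y| − |z + e_{I,ν} − R₆₀^{l₀} y| ≥ c⁗ |n|, where |n| denotes the Euclidean norm of n. -/

import Mathlib

noncomputable section

open scoped Real

/-- The plane `ℝ²` with the Euclidean norm. -/
abbrev V2 : Type := EuclideanSpace ℝ (Fin 2)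

/-- The vector `(a, b) ∈ ℝ²`. -/
def vec (a b : ℝ) : V2 := WithLp.toLp 2 ![a, b]

/-- The dot product on `ℝ²`. -/
def dot (a b : V2) : ℝ := a 0 * b 0 + a 1 * b 1

/-- `v₁ = (√3/2, 1/2)`. -/
def v1 : V2 := vec (Real.sqrt 3 / 2) (1 / 2)

/-- `v₂ = (√3/2, −1/2)`. -/
def v2 : V2 := vec (Real.sqrt 3 / 2) (-(1 / 2))

/-- The lattice point `m₁ v₁ + m₂ v₂` of `Λ_h`. -/
def lat (m : ℤ × ℤ) : V2 := (m.1 : ℝ) • v1 + (m.2 : ℝ) • v2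

/-- `k₁ = 2π(1/√3, 1)`. -/
def dk1 : V2 := vec (2 * π / Real.sqrt 3) (2 * π)

/-- `k₂ = 2π(1/√3, −1)`. -/
def dk2 : V2 := vec (2 * π / Real.sqrt 3) (-(2 * π))

/-- The dual lattice point `m₁ k₁ + m₂ k₂` of `Λ_h*`. -/
def dlat (m : ℤ × ℤ) : V2 := (m.1 : ℝ) • dk1 + (m.2 : ℝ) • dk2

/-- `K = (0, 4π/3)`. -/
def KK : V2 := vec 0 (4 * π / 3)

/-- Clockwise rotation by `2π/3` about the origin (the matrix `R`). -/
def rotR (x : V2) : V2 :=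
  vec (-(1/2) * x 0 + (Real.sqrt 3 / 2) * x 1) (-(Real.sqrt 3 / 2) * x 0 - (1/2) * x 1)

/-- The transpose `Rᵀ`. -/
def rotRT (x : V2) : V2 :=
  vec (-(1/2) * x 0 - (Real.sqrt 3 / 2) * x 1) ((Real.sqrt 3 / 2) * x 0 - (1/2) * x 1)

/-- Clockwise rotation by `π/3` about the origin (the matrix `R₆₀`). -/
def rot60 (x : V2) : V2 :=
  vec ((1/2) * x 0 + (Real.sqrt 3 / 2) * x 1) (-(Real.sqrt 3 / 2) * x 0 + (1/2) * x 1)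

/-- `e_{A,1} = (1/√3, 0)`. -/
def eA1 : V2 := vec (1 / Real.sqrt 3) 0

/-- `e_{A,ν} = R^{ν−1} e_{A,1}` for `ν = 1, 2, 3` (indexed by `Fin 3`). -/
def eA (ν : Fin 3) : V2 := rotR^[(ν : ℕ)] eA1

/-- `e_{B,ν} = −e_{A,ν}`. -/
def eB (ν : Fin 3) : V2 := -eA ν

/-- `e_{I,ν}` for `I ∈ {A, B}` (`true ↦ A`, `false ↦ B`). -/
def eVec (I : Bool) (ν : Fin 3) : V2 := if I then eA ν else eB ν

/-- `γ(k) = Σ_{ν=1}^3 exp(i k·e_{B,ν})`. -/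
def gam (k : V2) : ℂ := ∑ ν : Fin 3, Complex.exp (Complex.I * (dot k (eB ν)))

/-- `W_TB(k) = |γ(k)|`. -/
def Wtb (k : V2) : ℝ := ‖gam k‖

/-- `v_B = (1/√3, 0)`. -/
def vB : V2 := vec (1 / Real.sqrt 3) 0

/-- The hexagon center `x_c = (1/(2√3), −1/2)`. -/
def xc : V2 := vec (1 / (2 * Real.sqrt 3)) (-(1 / 2))

/-- The rotation operator `ℛ[f](x) = f(x_c + Rᵀ(x − x_c))`. -/
def Rop (f : V2 → ℂ) (x : V2) : ℂ := f (xc + rotRT (x - xc))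

/-- `τ = exp(2πi/3)`. -/
def tau : ℂ := Complex.exp (2 * (π : ℂ) * Complex.I / 3)

/-- The Euclidean norm of an integer pair. -/
def znorm (m : ℤ × ℤ) : ℝ := Real.sqrt ((m.1 : ℝ) ^ 2 + (m.2 : ℝ) ^ 2)

/-- `N_bad(w) = {m ∈ ℤ² : |w + m₁v₁ + m₂v₂| = 1/√3}`. -/
def Nbad (w : V2) : Set (ℤ × ℤ) := {m | ‖w + lat m‖ = 1 / Real.sqrt 3}

/-- The `i`-th standard basis vector of `ℝ²`. -/
def basis2 (i : Fin 2) : V2 := EuclideanSpace.single i 1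

/-- Partial derivative `∂_i f` of a complex-valued function on `ℝ²`. -/
def pd (i : Fin 2) (f : V2 → ℂ) : V2 → ℂ := fun x => fderiv ℝ f x (basis2 i)

/-- The Laplacian `Δf = ∂₁²f + ∂₂²f` of a complex-valued function on `ℝ²`. -/
def lap (f : V2 → ℂ) (x : V2) : ℂ :=
  ∑ i : Fin 2, fderiv ℝ (fun y => fderiv ℝ f y (basis2 i)) x (basis2 i)

/-- The radial profile of the fundamental solution of `−Δ + 1` on `ℝ²`:
`𝒦(r) = (2π)⁻¹ e^{−r} ∫₀^∞ e^{−ζ} ζ^{−1/2} (2r + ζ)^{−1/2} dζ`. -/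
def Kker (r : ℝ) : ℝ :=
  (2 * π)⁻¹ * Real.exp (-r) *
    ∫ ζ in Set.Ioi (0 : ℝ), Real.exp (-ζ) * ζ ^ (-(1/2 : ℝ)) * (2 * r + ζ) ^ (-(1/2 : ℝ))

/-! Among the six rotations `R₆₀^l y`, one makes an angle of at most `π/6` with `z + e`
(the inner products with `y`, `R₆₀ y`, `R₆₀² y` are `p`, `p + q`, `q` with
`p² + pq + q² = ¾ |z + e|² |y|²`, and `R₆₀³ = -1`). For that rotation
`|z + e - R₆₀^l y|² ≤ a² - √3 a b + b²` with `a = |z + e| ≤ |z| + 1/√3` and `b = |y|`, which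
forces `|z + e - R₆₀^l y| + |z| + |y| ≤ 1 - 1/150`. Since `|n₁v₁ + n₂v₂|² = n₁² + n₁n₂ + n₂²`
is at least `1` and at least `|n|²/2`, the difference of distances is at least
`|n₁v₁ + n₂v₂| - 1 + 1/150 ≥ |n₁v₁ + n₂v₂| / 150 ≥ |n| / 300`. -/

open scoped InnerProductSpace

lemma V2.norm_sq_eq (x : V2) : ‖x‖ ^ 2 = x 0 ^ 2 + x 1 ^ 2 := by
  simp [EuclideanSpace.real_norm_sq_eq, Fin.sum_univ_two]

lemma V2.inner_eq (x y : V2) : ⟪x, y⟫_ℝ = x 0 * y 0 + x 1 * y 1 := by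
  simp [PiLp.inner_apply, Fin.sum_univ_two, mul_comm]

lemma norm_iterate_of_norm_eq {E : Type*} [Norm E] {f : E → E} (hf : ∀ x, ‖f x‖ = ‖x‖)
    (k : ℕ) (x : E) : ‖f^[k] x‖ = ‖x‖ := by
  induction k with
  | zero => rfl
  | succ k ih => rw [Function.iterate_succ_apply', hf, ih]

lemma norm_rotR (x : V2) : ‖rotR x‖ = ‖x‖ := by
  refine (sq_eq_sq₀ (norm_nonneg _) (norm_nonneg _)).1 ?_
  rw [V2.norm_sq_eq, V2.norm_sq_eq]
  simp only [rotR, vec, PiLp.toLp_apply, Matrix.cons_val_zero, Matrix.cons_val_one]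
  linear_combination (x 0 ^ 2 + x 1 ^ 2) / 4 * Real.sq_sqrt (show (0 : ℝ) ≤ 3 by norm_num)

lemma norm_rot60 (x : V2) : ‖rot60 x‖ = ‖x‖ := by
  refine (sq_eq_sq₀ (norm_nonneg _) (norm_nonneg _)).1 ?_
  rw [V2.norm_sq_eq, V2.norm_sq_eq]
  simp only [rot60, vec, PiLp.toLp_apply, Matrix.cons_val_zero, Matrix.cons_val_one]
  linear_combination (x 0 ^ 2 + x 1 ^ 2) / 4 * Real.sq_sqrt (show (0 : ℝ) ≤ 3 by norm_num)

lemma norm_eVec (I : Bool) (ν : Fin 3) : ‖eVec I ν‖ = 1 / Real.sqrt 3 := by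
  have hA1 : ‖eA1‖ = 1 / Real.sqrt 3 := by
    rw [eA1, vec, EuclideanSpace.norm_eq]
    simp [Fin.sum_univ_two]
  have hA (ν : Fin 3) : ‖eA ν‖ = 1 / Real.sqrt 3 := by
    rw [eA, norm_iterate_of_norm_eq norm_rotR, hA1]
  cases I <;> simp [eVec, eB, hA]

lemma rot60_neg (x : V2) : rot60 (-x) = -rot60 x := by
  ext i; fin_cases i <;> simp [rot60, vec] <;> ring

lemma rot60_iterate_three (x : V2) : rot60^[3] x = -x := by
  have h3 := Real.sq_sqrt (show (0 : ℝ) ≤ 3 by norm_num)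
  ext i; fin_cases i <;> simp [rot60, vec]
  · linear_combination (-(3 * x 0 + Real.sqrt 3 * x 1) / 8) * h3
  · linear_combination ((Real.sqrt 3 * x 0 - 3 * x 1) / 8) * h3

lemma rot60_rot60 (x : V2) : rot60 (rot60 x) = rotR x := by
  have h3 := Real.sq_sqrt (show (0 : ℝ) ≤ 3 by norm_num)
  ext i; fin_cases i <;> simp [rot60, rotR, vec]
  · linear_combination (-x 0 / 4) * h3
  · linear_combination (-x 1 / 4) * h3

lemma rot60_eq_add_rotR (x : V2) : rot60 x = x + rotR x := by
  ext i; fin_cases i <;> simp [rot60, rotR, vec] <;> ring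

lemma inner_sq_add_inner_mul_add_inner_sq (u y : V2) :
    ⟪u, y⟫_ℝ ^ 2 + ⟪u, y⟫_ℝ * ⟪u, rotR y⟫_ℝ + ⟪u, rotR y⟫_ℝ ^ 2
      = (Real.sqrt 3 / 2 * (‖u‖ * ‖y‖)) ^ 2 := by
  have h3 := Real.sq_sqrt (show (0 : ℝ) ≤ 3 by norm_num)
  rw [mul_pow, mul_pow, V2.norm_sq_eq, V2.norm_sq_eq]
  simp only [V2.inner_eq, rotR, vec, Matrix.cons_val_zero, Matrix.cons_val_one]
  linear_combination (-(u 0 * y 0 + u 1 * y 1) ^ 2 / 4) * h3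

lemma sq_add_mul_add_sq_le (p q : ℝ) :
    p ^ 2 + p * q + q ^ 2 ≤ p ^ 2 ∨ p ^ 2 + p * q + q ^ 2 ≤ (p + q) ^ 2 ∨
      p ^ 2 + p * q + q ^ 2 ≤ q ^ 2 := by
  rcases le_total 0 (p * q) with hpq | hpq
  · exact Or.inr (Or.inl (by nlinarith))
  rcases le_total |q| |p| with h | h
  · left
    nlinarith [abs_mul_abs_self p, abs_mul_abs_self q, abs_mul p q, abs_of_nonpos hpq, abs_nonneg q]
  · right; right
    nlinarith [abs_mul_abs_self p, abs_mul_abs_self q, abs_mul p q, abs_of_nonpos hpq, abs_nonneg p]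

lemma exists_rot60_iterate_inner_ge (u y : V2) :
    ∃ l : Fin 6, Real.sqrt 3 / 2 * (‖u‖ * ‖y‖) ≤ ⟪u, rot60^[l] y⟫_ℝ := by
  set M := Real.sqrt 3 / 2 * (‖u‖ * ‖y‖)
  have hflip (l : ℕ) : ⟪u, rot60^[l + 3] y⟫_ℝ = -⟪u, rot60^[l] y⟫_ℝ := by
    rw [Function.iterate_add_apply, rot60_iterate_three,
      Function.Commute.iterate_left (g := Neg.neg) rot60_neg l y, inner_neg_right]
  have hsq : ∃ l : Fin 3, M ^ 2 ≤ ⟪u, rot60^[l] y⟫_ℝ ^ 2 := by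
    have := sq_add_mul_add_sq_le ⟪u, y⟫_ℝ ⟪u, rotR y⟫_ℝ
    rw [inner_sq_add_inner_mul_add_inner_sq, ← inner_add_right, ← rot60_eq_add_rotR,
      ← rot60_rot60] at this
    rcases this with h | h | h
    exacts [⟨0, h⟩, ⟨1, h⟩, ⟨2, h⟩]
  obtain ⟨l, hl⟩ := hsq
  have hM : 0 ≤ M := by positivity
  rcases le_total 0 ⟪u, rot60^[l] y⟫_ℝ with hpos | hneg
  · exact ⟨⟨l, by omega⟩, abs_le_of_sq_le_sq' hl hpos |>.2⟩
  · refine ⟨⟨l + 3, by omega⟩, ?_⟩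
    rw [hflip]
    nlinarith

lemma norm_sub_sq_le_of_inner_ge {E : Type*} [NormedAddCommGroup E] [InnerProductSpace ℝ E]
    {u w : E} (h : Real.sqrt 3 / 2 * (‖u‖ * ‖w‖) ≤ ⟪u, w⟫_ℝ) :
    ‖u - w‖ ^ 2 ≤ ‖u‖ ^ 2 - Real.sqrt 3 * ‖u‖ * ‖w‖ + ‖w‖ ^ 2 := by
  rw [norm_sub_sq_real]
  linarith

lemma norm_add_sub_add_norm_add_norm_le {E : Type*} [NormedAddCommGroup E]
    [InnerProductSpace ℝ E] {z e w : E} (he : ‖e‖ = 1 / Real.sqrt 3)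
    (hz : ‖z‖ < 0.33 / Real.sqrt 3) (hw : ‖w‖ < 0.33 / Real.sqrt 3)
    (h : Real.sqrt 3 / 2 * (‖z + e‖ * ‖w‖) ≤ ⟪z + e, w⟫_ℝ) :
    ‖z + e - w‖ + ‖z‖ + ‖w‖ ≤ 1 - 1 / 150 := by
  have h3 := Real.sq_sqrt (show (0 : ℝ) ≤ 3 by norm_num)
  have ht : 0 < Real.sqrt 3 := by positivity
  set t := Real.sqrt 3
  have ht1 : 1.732 ≤ t := by nlinarith
  have ht2 : t ≤ 1.7321 := by nlinarith
  set s := ‖z‖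
  set b := ‖w‖
  set a := ‖z + e‖
  have hs0 : 0 ≤ s := norm_nonneg z
  have hb0 : 0 ≤ b := norm_nonneg w
  have hst : s * t ≤ 0.33 := ((lt_div_iff₀ ht).1 hz).le
  have hbt : b * t ≤ 0.33 := ((lt_div_iff₀ ht).1 hw).le
  have hs1 : s ≤ 0.1906 := by nlinarith
  have hb1 : b ≤ 0.1906 := by nlinarith
  have ha : a ≤ s + t / 3 := by
    have h1 : 1 / t = t / 3 := by field_simp; linarith
    simpa only [he, h1] using norm_add_le z e
  have hmono : a ^ 2 - t * a * b ≤ (s + t / 3) ^ 2 - t * (s + t / 3) * b := by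
    nlinarith [mul_nonneg (sub_nonneg.2 ha) (norm_nonneg (z + e))]
  -- bilinear in `(s, b)` up to a linear term, hence extremal at `s = b = 0.33/√3`
  have hcorner : (s + t / 3) ^ 2 - t * (s + t / 3) * b + b ^ 2 ≤ (1 - s - b - 1 / 150) ^ 2 := by
    nlinarith [mul_nonneg (sub_nonneg.2 hs1) (sub_nonneg.2 hb1)]
  have hf : ‖z + e - w‖ ^ 2 ≤ (1 - s - b - 1 / 150) ^ 2 := by
    linarith [norm_sub_sq_le_of_inner_ge h]
  linarith [abs_le_of_sq_le_sq' hf (by linarith : (0:ℝ) ≤ 1 - s - b - 1 / 150)]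

lemma norm_lat_sq (m : ℤ × ℤ) :
    ‖lat m‖ ^ 2 = (m.1 : ℝ) ^ 2 + (m.1 : ℝ) * m.2 + (m.2 : ℝ) ^ 2 := by
  rw [V2.norm_sq_eq]
  simp only [lat, v1, v2, vec, PiLp.add_apply, PiLp.smul_apply,
    Matrix.cons_val_zero, Matrix.cons_val_one, smul_eq_mul]
  linear_combination ((m.1 + m.2 : ℝ) ^ 2 / 4) * Real.sq_sqrt (show (0 : ℝ) ≤ 3 by norm_num)

lemma one_le_norm_lat {m : ℤ × ℤ} (hm : m ≠ (0, 0)) : 1 ≤ ‖lat m‖ := by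
  have hq : (1 : ℤ) ≤ m.1 ^ 2 + m.1 * m.2 + m.2 ^ 2 := by
    obtain ⟨a, b⟩ := m
    rcases eq_or_ne a 0 with rfl | ha
    · have hb : b ≠ 0 := by simpa using hm
      nlinarith [Int.one_le_abs hb, sq_abs b]
    · nlinarith [sq_nonneg (a + 2 * b), Int.one_le_abs ha, sq_abs a, abs_nonneg a]
  have hq' : (1 : ℝ) ≤ ‖lat m‖ ^ 2 := by rw [norm_lat_sq]; exact_mod_cast hq
  nlinarith [norm_nonneg (lat m)]

lemma znorm_le_two_mul_norm_lat (m : ℤ × ℤ) : znorm m ≤ 2 * ‖lat m‖ := by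
  rw [znorm, Real.sqrt_le_left (by positivity), mul_pow, norm_lat_sq]
  nlinarith [sq_nonneg ((m.1 : ℝ) + m.2)]

/-- (Geometric Lemma, part 4.) There is `c⁗ > 0` so that for all
`I, ν`, all `z, y` with `|z|, |y| < 0.33/√3` and every `n ∈ ℤ²`, `n ≠ (0,0)`,
some `l₀ ∈ {0,…,5}` satisfies
`|z + n₁v₁ + n₂v₂ − y| − |z + e_{I,ν} − R₆₀^{l₀} y| ≥ c⁗ |n|`. -/
theorem statement13 :
    ∃ c'''' : ℝ, 0 < c'''' ∧ ∀ (I : Bool) (ν : Fin 3) (z y : V2),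
      ‖z‖ < 0.33 / Real.sqrt 3 → ‖y‖ < 0.33 / Real.sqrt 3 →
      ∀ n : ℤ × ℤ, n ≠ (0, 0) → ∃ l₀ : Fin 6,
        c'''' * znorm n ≤ ‖z + lat n - y‖ - ‖z + eVec I ν - rot60^[(l₀ : ℕ)] y‖ := by
  refine ⟨1 / 300, by norm_num, fun I ν z y hz hy n hn => ?_⟩
  obtain ⟨l, hl⟩ := exists_rot60_iterate_inner_ge (z + eVec I ν) y
  refine ⟨l, ?_⟩
  have hrot : ‖rot60^[l] y‖ = ‖y‖ := norm_iterate_of_norm_eq norm_rot60 l y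
  have hnear : ‖z + eVec I ν - rot60^[l] y‖ + ‖z‖ + ‖y‖ ≤ 1 - 1 / 150 := by
    have := norm_add_sub_add_norm_add_norm_le (norm_eVec I ν) hz (hrot ▸ hy) (hrot ▸ hl)
    rwa [hrot] at this
  have hfar : ‖lat n‖ - ‖z‖ - ‖y‖ ≤ ‖z + lat n - y‖ := by
    have := norm_sub_norm_le (lat n) (y - z)
    rw [show lat n - (y - z) = z + lat n - y by abel] at this
    linarith [norm_sub_le y z]
  linarith [one_le_norm_lat hn, znorm_le_two_mul_norm_lat n]
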